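/- In an image-finite LTS with reflexive silent steps, if every PHMLU formula true in p is true in q, then p is directed branching bisimilar to q. -/

import Mathlib

variable {X A : Type*}

/-- Formulas of Hennessy-Milner Logic with Until. `none` is the silent action τ. -/
inductive HMLU (A : Type*) where
  | top : HMLU A
  | neg : HMLU A → HMLU A
  | and : HMLU A → HMLU A → HMLU A
  | dia : HMLU A → Option A → HMLU A → HMLU A

/-- Satisfaction: `p ⊨ δ⟨α⟩ψ` iff there is a τ-path from `p` along which every state
satisfies `δ`, ending in a state that `α`-steps to a state satisfying `ψ`. -/
def Sat (step : Option A → X → X → Prop) : HMLU A → X → Prop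
  | .top, _ => True
  | .neg φ, p => ¬ Sat step φ p
  | .and φ ψ, p => Sat step φ p ∧ Sat step ψ p
  | .dia δ α ψ, p => ∃ p' p'', Sat step δ p ∧
      Relation.ReflTransGen (fun x y => step none x y ∧ Sat step δ y) p p' ∧
      step α p' p'' ∧ Sat step ψ p''

mutual
  /-- Positive HMLU formulas. -/
  inductive Positive : HMLU A → Prop
    | top : Positive .top
    | neg {φ : HMLU A} : Negative φ → Positive (.neg φ)
    | and {φ ψ : HMLU A} : Positive φ → Positive ψ → Positive (.and φ ψ)
    | dia {δ ψ : HMLU A} {α : Option A} : Positive δ → Positive (.dia δ α ψ)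
  /-- Negative HMLU formulas. -/
  inductive Negative : HMLU A → Prop
    | top : Negative .top
    | neg {φ : HMLU A} : Positive φ → Negative (.neg φ)
    | and {φ ψ : HMLU A} : Negative φ → Negative ψ → Negative (.and φ ψ)
end

/-- Good formulas: every diamond subformula has a positive left-hand side. -/
inductive Good : HMLU A → Prop
  | top : Good .top
  | neg {φ : HMLU A} : Good φ → Good (.neg φ)
  | and {φ ψ : HMLU A} : Good φ → Good ψ → Good (.and φ ψ)
  | dia {δ ψ : HMLU A} {α : Option A} : Positive δ → Good δ → Good ψ → Good (.dia δ α ψ)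
/-- Formulas of Positive Hennessy-Milner Logic with Until. -/
inductive PHMLU (A : Type*) where
  | top : PHMLU A
  | bot : PHMLU A
  | and : PHMLU A → PHMLU A → PHMLU A
  | or : PHMLU A → PHMLU A → PHMLU A
  | dia : PHMLU A → Option A → PHMLU A → PHMLU A → PHMLU A

/-- The embedding of PHMLU into HMLU (`⊥ := ¬⊤`, `∨` by De Morgan,
`δ⟨α⟩(ψ⁺ ∧ ¬ψ⁻)` as a diamond with a conjunction on the right). -/
def PHMLU.toHMLU : PHMLU A → HMLU A
  | .top => .top
  | .bot => .neg .top
  | .and φ ψ => .and φ.toHMLU ψ.toHMLU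
  | .or φ ψ => .neg (.and (.neg φ.toHMLU) (.neg ψ.toHMLU))
  | .dia δ α ψp ψn => .dia δ.toHMLU α (.and ψp.toHMLU (.neg ψn.toHMLU))
/-- `R` is a directed branching bisimulation. -/
def IsDBBisim (step : Option A → X → X → Prop) (R : X → X → Prop) : Prop :=
  ∀ (α : Option A) (p p' q : X), R p q → step α p p' →
    ∃ q' q'', Relation.ReflTransGen (step none) q q' ∧ step α q' q'' ∧
      R p q' ∧ R p' q'' ∧ R q'' p'

/-- Directed branching bisimilarity. -/
def DBBisim (step : Option A → X → X → Prop) (p q : X) : Prop :=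
  ∃ R : X → X → Prop, IsDBBisim step R ∧ R p q

/-!
PHMLU-theory inclusion is itself a directed branching bisimulation. Otherwise some step
`p →α p'` has no matching `q ↠τ q' →α q''`. Each of the finitely many candidates `(q', q'')`
fails one of the three required inclusions and is ruled out by a formula. Conjoining the
formulas for `p`, conjoining those for `p'` and disjoining the reverse-inclusion formulas
gives one diamond `δ⟨α⟩(ψ⁺ ∧ ¬ψ⁻)` that `p` satisfies but `q` does not.
-/

lemma Relation.ReflTransGen.pred_end_of_and {r : X → X → Prop} {P : X → Prop} {a b : X}
    (h : Relation.ReflTransGen (fun x y => r x y ∧ P y) a b) (ha : P a) : P b := by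
  induction h with
  | refl => exact ha
  | tail _ hstep _ => exact hstep.2

namespace PHMLU

variable (step : Option A → X → X → Prop)

def PSat (φ : PHMLU A) (p : X) : Prop := Sat step φ.toHMLU p

def TheoryLE (p q : X) : Prop := ∀ φ : PHMLU A, PSat step φ p → PSat step φ q

def conj : List (PHMLU A) → PHMLU A
  | [] => .top
  | φ :: l => .and φ (conj l)

def disj : List (PHMLU A) → PHMLU A
  | [] => .bot
  | φ :: l => .or φ (disj l)

variable {step}

@[simp] lemma psat_top (p : X) : PSat step (.top : PHMLU A) p := trivial

@[simp] lemma not_psat_bot (p : X) : ¬ PSat step (.bot : PHMLU A) p := fun h => h trivial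

@[simp] lemma psat_and (φ ψ : PHMLU A) (p : X) :
    PSat step (.and φ ψ) p ↔ PSat step φ p ∧ PSat step ψ p := Iff.rfl

@[simp] lemma psat_or (φ ψ : PHMLU A) (p : X) :
    PSat step (.or φ ψ) p ↔ PSat step φ p ∨ PSat step ψ p := by
  simp only [PSat, toHMLU, Sat]
  tauto

lemma psat_dia (δ : PHMLU A) (α : Option A) (ψp ψn : PHMLU A) (p : X) :
    PSat step (.dia δ α ψp ψn) p ↔ ∃ p' p'', PSat step δ p ∧
      Relation.ReflTransGen (fun x y => step none x y ∧ PSat step δ y) p p' ∧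
      step α p' p'' ∧ PSat step ψp p'' ∧ ¬ PSat step ψn p'' := Iff.rfl

lemma psat_conj_map {ι : Type*} (f : ι → PHMLU A) (l : List ι) (p : X) :
    PSat step (conj (l.map f)) p ↔ ∀ i ∈ l, PSat step (f i) p := by
  induction l with
  | nil => simp [conj]
  | cons i l ih => simp [conj, ih]

lemma psat_disj_map {ι : Type*} (f : ι → PHMLU A) (l : List ι) (p : X) :
    PSat step (disj (l.map f)) p ↔ ∃ i ∈ l, PSat step (f i) p := by
  induction l with
  | nil => simp [disj]
  | cons i l ih => simp [disj, ih]

instance : Inhabited (PHMLU A) := ⟨.top⟩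

lemma exists_separating_triple {p p' q' q'' : X}
    (hne : ¬ (TheoryLE step p q' ∧ TheoryLE step p' q'' ∧ TheoryLE step q'' p')) :
    ∃ δ ψp ψn : PHMLU A, PSat step δ p ∧ PSat step ψp p' ∧ ¬ PSat step ψn p' ∧
      ¬ (PSat step δ q' ∧ PSat step ψp q'' ∧ ¬ PSat step ψn q'') := by
  simp only [TheoryLE, not_and_or, not_forall, exists_prop] at hne
  rcases hne with ⟨δ, hp, hq⟩ | ⟨ψ, hp, hq⟩ | ⟨ψ, hq, hp⟩
  · exact ⟨δ, .top, .bot, hp, psat_top p', not_psat_bot p', fun h => hq h.1⟩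
  · exact ⟨.top, ψ, .bot, psat_top p, hp, not_psat_bot p', fun h => hq h.2.1⟩
  · exact ⟨.top, .top, ψ, psat_top p, psat_top p', hp, fun h => h.2.2 hq⟩

theorem isDBBisim_theoryLE
    (hfin : ∀ (α : Option A) (q : X),
      {x : X × X | Relation.ReflTransGen (step none) q x.1 ∧ step α x.1 x.2}.Finite) :
    IsDBBisim step (TheoryLE step) := by
  intro α p p' q hpq hstep
  by_contra! hmatch
  set S := {x : X × X | Relation.ReflTransGen (step none) q x.1 ∧ step α x.1 x.2}
  have hsep : ∀ x ∈ S, ∃ δ ψp ψn : PHMLU A, PSat step δ p ∧ PSat step ψp p' ∧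
      ¬ PSat step ψn p' ∧ ¬ (PSat step δ x.1 ∧ PSat step ψp x.2 ∧ ¬ PSat step ψn x.2) :=
    fun x hx => exists_separating_triple fun h => hmatch x.1 x.2 hx.1 hx.2 h.1 h.2.1 h.2.2
  choose! δ ψp ψn hδ hψp hψn hfail using hsep
  let L := (hfin α q).toFinset.toList
  have memL : ∀ x, x ∈ L ↔ x ∈ S := fun _ => Finset.mem_toList.trans (Set.Finite.mem_toFinset _)
  let Φ : PHMLU A := .dia (conj (L.map δ)) α (conj (L.map ψp)) (disj (L.map ψn))
  have hΦp : PSat step Φ p := by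
    refine (psat_dia _ _ _ _ p).2 ⟨p, p', ?_, .refl, hstep, ?_, ?_⟩
    · exact (psat_conj_map δ L p).2 fun x hx => hδ x ((memL x).1 hx)
    · exact (psat_conj_map ψp L p').2 fun x hx => hψp x ((memL x).1 hx)
    · rw [psat_disj_map]
      rintro ⟨x, hx, hsat⟩
      exact hψn x ((memL x).1 hx) hsat
  obtain ⟨q', q'', hδq, hpath, hstepq, hψpq, hψnq⟩ := (psat_dia _ _ _ _ q).1 (hpq Φ hΦp)
  have hx : (q', q'') ∈ S := ⟨Relation.ReflTransGen.mono (fun _ _ h => h.1) _ _ hpath, hstepq⟩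
  refine hfail _ hx ⟨?_, ?_, ?_⟩
  · exact (psat_conj_map δ L q').1 (hpath.pred_end_of_and hδq) _ ((memL _).2 hx)
  · exact (psat_conj_map ψp L q'').1 hψpq _ ((memL _).2 hx)
  · exact fun h => hψnq ((psat_disj_map ψn L q'').2 ⟨_, (memL _).2 hx, h⟩)

end PHMLU

theorem phmlu_theory_subset_gives_dbBisim (step : Option A → X → X → Prop)
    (htau : ∀ p : X, step none p p)
    (hfin : ∀ (α : Option A) (q : X),
      {x : X × X | Relation.ReflTransGen (step none) q x.1 ∧ step α x.1 x.2}.Finite)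
    (hfin' : ∀ (α : Option A) (q : X), {q' : X | step α q q'}.Finite)
    (p q : X) (h : ∀ φ : PHMLU A, Sat step φ.toHMLU p → Sat step φ.toHMLU q) :
    DBBisim step p q :=
  ⟨PHMLU.TheoryLE step, PHMLU.isDBBisim_theoryLE hfin, h⟩
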